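/- arXiv:1810.06335 — 3 statements merged into one kernel-verified Lean document; each statement's English description precedes it below -/
import Mathlib

section
/- In the correlated lognormal futures model, for every initial temperature price y > 0 the map y ↦ ∫∫ g(F^E(x,u))·h(F^I(y,u,v)) dμ(u,v) is differentiable at y, and its derivative (the temperature delta in the correlated case) equals Δ_I = ∫∫ g(F^E(x,u))·h(F^I(y,u,v)) · v/(y·σ_I·√(1−ρ²)·T) dμ(u,v), i.e. the Malliavin weight is π^{Δ_I}(v) = v/(y σ_I √(1−ρ²) T). -/
/-!
Put `a = σ_I √(1 − ρ²)` and `s = log y / a`. Then `y · exp (σ_I (ρ u + √(1 − ρ²) v) − σ_I² T / 2)`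
equals `exp (a (v + s) + σ_I ρ u − σ_I² T / 2)`, so the price is `E[P(U, V + s)]` for one fixed
payoff `P`, and `P` has exponential growth because `g` and `h` grow polynomially. The
Cameron–Martin formula `E[P(U, V + s)] = E[exp (s V / T − s² / 2T) P(U, V)]` moves the parameter
into an explicit smooth weight. Gaussian exponential moments dominate the derivative of that
weight, so we may differentiate under the integral, and reading the result back through
Cameron–Martin gives `d/ds E[P(U, V + s)] = E[P(U, V + s) V / T]`. The chain rule with
`ds/dy = 1 / (a y)` produces the weight `v / (y σ_I √(1 − ρ²) T)`.
-/

open MeasureTheory ProbabilityTheory Real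
open scoped NNReal

lemma hasDerivAt_exp_shift_weight (v x s : ℝ) :
    HasDerivAt (fun s ↦ exp (s * x / v - s ^ 2 / (2 * v)))
      (exp (s * x / v - s ^ 2 / (2 * v)) * ((x - s) / v)) s := by
  have h := ((hasDerivAt_mul_const x).div_const v).fun_sub ((hasDerivAt_pow 2 s).div_const (2 * v))
  exact h.exp.congr_deriv (by field_simp; ring)

lemma exp_shift_weight_le {v M s : ℝ} (hv : 0 < v) (hs : |s| ≤ M) (x : ℝ) :
    exp (s * x / v - s ^ 2 / (2 * v)) ≤ exp (M / v * |x|) := by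
  have hsx : s * x ≤ M * |x| :=
    (le_abs_self _).trans (by rw [abs_mul]; exact mul_le_mul_of_nonneg_right hs (abs_nonneg x))
  have : 0 ≤ s ^ 2 / (2 * v) := by positivity
  rw [exp_le_exp, div_mul_eq_mul_div]
  linarith [div_le_div_of_nonneg_right hsx hv.le]

lemma exp_shift_weight_mul_abs_le {v M s : ℝ} (hv : 0 < v) (hs : |s| ≤ M) (x : ℝ) :
    exp (s * x / v - s ^ 2 / (2 * v)) * (|x - s| / v) ≤ exp M / v * exp ((M / v + 1) * |x|) := by
  have hxs : |x - s| ≤ exp (|x| + M) :=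
    calc |x - s| ≤ |x - s| + 1 := by linarith
      _ ≤ exp |x - s| := add_one_le_exp _
      _ ≤ exp (|x| + M) := exp_le_exp.mpr ((abs_sub _ _).trans (by linarith))
  calc exp (s * x / v - s ^ 2 / (2 * v)) * (|x - s| / v)
      ≤ exp (M / v * |x|) * (exp (|x| + M) / v) :=
        mul_le_mul (exp_shift_weight_le hv hs x) (by gcongr) (by positivity) (exp_nonneg _)
    _ = exp M / v * exp ((M / v + 1) * |x|) := by
        rw [← mul_div_assoc, ← exp_add, show M / v * |x| + (|x| + M) = M + (M / v + 1) * |x| by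
          ring, exp_add]
        ring

namespace ProbabilityTheory

variable {v : ℝ≥0}

lemma gaussianPDFReal_eq_mul_exp (m x : ℝ) :
    gaussianPDFReal m v x = gaussianPDFReal 0 v x * exp (m * x / v - m ^ 2 / (2 * v)) := by
  simp only [gaussianPDFReal, mul_assoc, ← exp_add]
  congr 2
  ring

lemma gaussianReal_map_add_const_eq_withDensity (hv : v ≠ 0) (s : ℝ) :
    (gaussianReal 0 v).map (· + s) =
      (gaussianReal 0 v).withDensity
        fun x ↦ ENNReal.ofReal (exp (s * x / v - s ^ 2 / (2 * v))) := by
  rw [gaussianReal_map_add_const, zero_add, gaussianReal_of_var_ne_zero _ hv,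
    gaussianReal_of_var_ne_zero _ hv, ← withDensity_mul _ (measurable_gaussianPDF _ _)
      (by fun_prop)]
  congr 1
  funext x
  rw [Pi.mul_apply, gaussianPDF, gaussianPDF, ← ENNReal.ofReal_mul (gaussianPDFReal_nonneg _ _ _),
    ← gaussianPDFReal_eq_mul_exp]

variable {α E : Type*} [MeasurableSpace α] {ν : Measure α}
  [NormedAddCommGroup E] [NormedSpace ℝ E]

lemma integral_prod_gaussianReal_comp_add [SFinite ν] (hv : v ≠ 0) (s : ℝ) (G : α × ℝ → E) :
    ∫ w, G (w.1, w.2 + s) ∂ν.prod (gaussianReal 0 v) =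
      ∫ w, exp (s * w.2 / v - s ^ 2 / (2 * v)) • G w ∂ν.prod (gaussianReal 0 v) := by
  have hmp : MeasurePreserving (Prod.map id (· + s)) (ν.prod (gaussianReal 0 v))
      (ν.prod ((gaussianReal 0 v).map (· + s))) :=
    (MeasurePreserving.id ν).prod ⟨measurable_add_const s, rfl⟩
  have hemb : MeasurableEmbedding (Prod.map id (· + s) : α × ℝ → α × ℝ) :=
    ((MeasurableEquiv.refl α).prodCongr (MeasurableEquiv.addRight s)).measurableEmbedding
  calc ∫ w, G (w.1, w.2 + s) ∂ν.prod (gaussianReal 0 v)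
      = ∫ w, G (Prod.map id (· + s) w) ∂ν.prod (gaussianReal 0 v) := rfl
    _ = _ := hmp.integral_comp hemb G
    _ = _ := by
      rw [gaussianReal_map_add_const_eq_withDensity hv,
        prod_withDensity_right (by fun_prop), integral_withDensity_eq_integral_toReal_smul
          (by fun_prop) (ae_of_all _ fun _ ↦ ENNReal.ofReal_lt_top)]
      simp only [ENNReal.toReal_ofReal (exp_nonneg _)]

lemma integrable_exp_mul_abs_gaussianReal {μ : ℝ} (b : ℝ) :
    Integrable (fun x ↦ exp (b * |x|)) (gaussianReal μ v) := by
  refine ((integrable_exp_mul_gaussianReal b).add (integrable_exp_mul_gaussianReal (-b))).mono'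
    (by fun_prop) (ae_of_all _ fun x ↦ ?_)
  rw [norm_of_nonneg (exp_nonneg _), Pi.add_apply]
  rcases abs_cases x with ⟨hx, -⟩ | ⟨hx, -⟩ <;> rw [hx]
  · linarith [exp_nonneg (-b * x)]
  · rw [mul_neg, ← neg_mul]; linarith [exp_nonneg (b * x)]

theorem hasDerivAt_integral_exp_shift_weight_mul (hv : v ≠ 0) {P : α × ℝ → ℝ}
    (hP : AEStronglyMeasurable P (ν.prod (gaussianReal 0 v))) {A : α → ℝ} (hA : Integrable A ν)
    {β : ℝ} (hPA : ∀ w, |P w| ≤ A w.1 * exp (β * |w.2|)) (s : ℝ) :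
    HasDerivAt (fun s ↦ ∫ w, exp (s * w.2 / v - s ^ 2 / (2 * v)) * P w ∂ν.prod (gaussianReal 0 v))
      (∫ w, exp (s * w.2 / v - s ^ 2 / (2 * v)) * ((w.2 - s) / v) * P w
        ∂ν.prod (gaussianReal 0 v)) s := by
  have hv0 : (0 : ℝ) < v := NNReal.coe_pos.mpr (pos_iff_ne_zero.mpr hv)
  have hdom : ∀ c, Integrable (fun w : α × ℝ ↦ A w.1 * exp (c * |w.2|))
      (ν.prod (gaussianReal 0 v)) := fun c ↦
    hA.mul_prod (integrable_exp_mul_abs_gaussianReal c)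
  set M := |s| + 1
  have hM : ∀ s' ∈ Metric.ball s 1, |s'| ≤ M := fun s' hs' ↦ by
    rw [Metric.mem_ball, Real.dist_eq] at hs'
    linarith [abs_sub_abs_le_abs_sub s' s]
  refine (hasDerivAt_integral_of_dominated_loc_of_deriv_le
    (bound := fun w ↦ exp M / v * (A w.1 * exp ((β + M / v + 1) * |w.2|)))
    (Metric.ball_mem_nhds s one_pos) (.of_forall fun s' ↦ by fun_prop) ?_ (by fun_prop) ?_
    ((hdom _).const_mul _) (ae_of_all _ fun w s' _ ↦
      (hasDerivAt_exp_shift_weight v w.2 s').mul_const (P w))).2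
  · refine (hdom (β + M / v)).mono' (by fun_prop) (ae_of_all _ fun w ↦ ?_)
    rw [norm_mul, norm_of_nonneg (exp_nonneg _), Real.norm_eq_abs]
    calc exp (s * w.2 / v - s ^ 2 / (2 * v)) * |P w|
        ≤ exp (M / v * |w.2|) * (A w.1 * exp (β * |w.2|)) :=
          mul_le_mul (exp_shift_weight_le hv0 (by simp [M]) _) (hPA w) (abs_nonneg _)
            (exp_nonneg _)
      _ = A w.1 * exp ((β + M / v) * |w.2|) := by rw [mul_left_comm, ← exp_add]; ring_nf
  · refine ae_of_all _ fun w s' hs' ↦ ?_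
    rw [norm_mul, norm_mul, norm_of_nonneg (exp_nonneg _), Real.norm_eq_abs, Real.norm_eq_abs,
      abs_div, abs_of_pos hv0]
    calc exp (s' * w.2 / v - s' ^ 2 / (2 * v)) * (|w.2 - s'| / v) * |P w|
        ≤ exp M / v * exp ((M / v + 1) * |w.2|) * (A w.1 * exp (β * |w.2|)) :=
          mul_le_mul (exp_shift_weight_mul_abs_le hv0 (hM s' hs') _) (hPA w) (abs_nonneg _)
            (by positivity)
      _ = exp M / v * (A w.1 * exp ((β + M / v + 1) * |w.2|)) := by
          rw [mul_assoc, mul_left_comm (exp _), ← exp_add]; ring_nf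

theorem hasDerivAt_integral_prod_gaussianReal_comp_add [SFinite ν] (hv : v ≠ 0) {P : α × ℝ → ℝ}
    (hP : AEStronglyMeasurable P (ν.prod (gaussianReal 0 v))) {A : α → ℝ} (hA : Integrable A ν)
    {β : ℝ} (hPA : ∀ w, |P w| ≤ A w.1 * exp (β * |w.2|)) (s : ℝ) :
    HasDerivAt (fun s ↦ ∫ w, P (w.1, w.2 + s) ∂ν.prod (gaussianReal 0 v))
      (∫ w, P (w.1, w.2 + s) * (w.2 / v) ∂ν.prod (gaussianReal 0 v)) s := by
  have hweighted : ∫ w, P (w.1, w.2 + s) * (w.2 / v) ∂ν.prod (gaussianReal 0 v) =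
      ∫ w, exp (s * w.2 / v - s ^ 2 / (2 * v)) * ((w.2 - s) / v) * P w
        ∂ν.prod (gaussianReal 0 v) := by
    simpa [mul_comm, mul_assoc] using
      integral_prod_gaussianReal_comp_add hv s fun w ↦ P w * ((w.2 - s) / v)
  rw [funext fun s ↦ integral_prod_gaussianReal_comp_add hv s P, hweighted]
  exact hasDerivAt_integral_exp_shift_weight_mul hv hP hA hPA s

end ProbabilityTheory

section PolynomialGrowth

variable {C : ℝ} {p : ℕ}

lemma abs_comp_mul_exp_le {f : ℝ → ℝ} (hf : ∀ z, |f z| ≤ C * (1 + |z|) ^ p) (c t : ℝ) :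
    |f (c * exp t)| ≤ C * (1 + |c|) ^ p * exp (p * |t|) := by
  have hC : 0 ≤ C := by simpa using (abs_nonneg _).trans (hf 0)
  have hle : 1 + |c * exp t| ≤ (1 + |c|) * exp |t| := by
    rw [abs_mul, abs_of_pos (exp_pos t)]
    have h₁ : 1 ≤ exp |t| := one_le_exp (abs_nonneg t)
    have h₂ : exp t ≤ exp |t| := exp_le_exp.mpr (le_abs_self t)
    nlinarith [abs_nonneg c]
  calc |f (c * exp t)| ≤ C * (1 + |c * exp t|) ^ p := hf _
    _ ≤ C * ((1 + |c|) * exp |t|) ^ p := by gcongr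
    _ = C * (1 + |c|) ^ p * exp (p * |t|) := by rw [mul_pow, ← exp_nat_mul, mul_assoc]

lemma abs_mul_comp_exp_affine_le {f₁ f₂ : ℝ → ℝ} (hf₁ : ∀ z, |f₁ z| ≤ C * (1 + |z|) ^ p)
    (hf₂ : ∀ z, |f₂ z| ≤ C * (1 + |z|) ^ p) (x α γ α' γ' a u v : ℝ) :
    |f₁ (x * exp (α * u + γ)) * f₂ (exp (a * v + (α' * u + γ')))| ≤
      C ^ 2 * (2 * (1 + |x|)) ^ p * exp (p * (|γ| + |γ'|)) * exp (p * (|α| + |α'|) * |u|) *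
        exp (p * |a| * |v|) := by
  have hC : 0 ≤ C := by simpa using (abs_nonneg _).trans (hf₁ 0)
  have h₂ : |f₂ (exp (a * v + (α' * u + γ')))| ≤
      C * 2 ^ p * exp (p * |a * v + (α' * u + γ')|) := by
    simpa [one_add_one_eq_two] using abs_comp_mul_exp_le hf₂ 1 (a * v + (α' * u + γ'))
  have hsum : |α * u + γ| + |a * v + (α' * u + γ')| ≤
      (|γ| + |γ'|) + (|α| + |α'|) * |u| + |a| * |v| := by
    have := abs_add_le (α * u) γ
    have := abs_add_le (a * v) (α' * u + γ')
    have := abs_add_le (α' * u) γ'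
    simp only [abs_mul] at *
    linarith
  calc |f₁ (x * exp (α * u + γ)) * f₂ (exp (a * v + (α' * u + γ')))|
      ≤ (C * (1 + |x|) ^ p * exp (p * |α * u + γ|)) *
          (C * 2 ^ p * exp (p * |a * v + (α' * u + γ')|)) := by
        rw [abs_mul]
        exact mul_le_mul (abs_comp_mul_exp_le hf₁ x _) h₂ (abs_nonneg _) (by positivity)
    _ = C ^ 2 * (2 * (1 + |x|)) ^ p * exp (p * (|α * u + γ| + |a * v + (α' * u + γ')|)) := by
        rw [mul_add (p : ℝ), exp_add, mul_pow]; ring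
    _ ≤ C ^ 2 * (2 * (1 + |x|)) ^ p *
          exp (p * (|γ| + |γ'|) + p * (|α| + |α'|) * |u| + p * |a| * |v|) := by
        gcongr
        nlinarith [(Nat.cast_nonneg p : (0 : ℝ) ≤ p)]
    _ = _ := by rw [exp_add, exp_add]; ring

end PolynomialGrowth

theorem temperature_delta_correlated_general
    (T σE σI ρ : ℝ) (hT : 0 < T) (hσI : 0 < σI)
    (hρ : ρ ∈ Set.Ioo (-1 : ℝ) 1)
    (g h : ℝ → ℝ) (hg : Measurable g) (hh : Measurable h)
    (C : ℝ) (p : ℕ)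
    (hgb : ∀ z : ℝ, |g z| ≤ C * (1 + |z|) ^ p)
    (hhb : ∀ z : ℝ, |h z| ≤ C * (1 + |z|) ^ p)
    (x y : ℝ) (hy : 0 < y) :
    HasDerivAt
      (fun y' : ℝ =>
        ∫ w : ℝ × ℝ,
          g (x * Real.exp (σE * w.1 - σE ^ 2 * T / 2)) *
            h (y' * Real.exp (σI * (ρ * w.1 + Real.sqrt (1 - ρ ^ 2) * w.2) - σI ^ 2 * T / 2))
          ∂((gaussianReal 0 T.toNNReal).prod (gaussianReal 0 T.toNNReal)))
      (∫ w : ℝ × ℝ,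
          g (x * Real.exp (σE * w.1 - σE ^ 2 * T / 2)) *
            h (y * Real.exp (σI * (ρ * w.1 + Real.sqrt (1 - ρ ^ 2) * w.2) - σI ^ 2 * T / 2)) *
            (w.2 / (y * σI * Real.sqrt (1 - ρ ^ 2) * T))
        ∂((gaussianReal 0 T.toNNReal).prod (gaussianReal 0 T.toNNReal)))
      y := by
  have hs : 0 < √(1 - ρ ^ 2) := sqrt_pos.mpr (by nlinarith [hρ.1, hρ.2])
  have ha : 0 < σI * √(1 - ρ ^ 2) := mul_pos hσI hs
  -- the exponents are written in the shape `α * u + γ` of `abs_mul_comp_exp_affine_le`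
  set P : ℝ × ℝ → ℝ := fun w ↦ g (x * exp (σE * w.1 + -(σE ^ 2 * T / 2))) *
    h (exp (σI * √(1 - ρ ^ 2) * w.2 + (σI * ρ * w.1 + -(σI ^ 2 * T / 2))))
  have hprice : ∀ y' > 0, ∀ w : ℝ × ℝ,
      g (x * exp (σE * w.1 - σE ^ 2 * T / 2)) *
        h (y' * exp (σI * (ρ * w.1 + √(1 - ρ ^ 2) * w.2) - σI ^ 2 * T / 2)) =
      P (w.1, w.2 + log y' / (σI * √(1 - ρ ^ 2))) := fun y' hy' w ↦ by
    simp only [P, ← sub_eq_add_neg]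
    rw [show σI * √(1 - ρ ^ 2) * (w.2 + log y' / (σI * √(1 - ρ ^ 2))) +
        (σI * ρ * w.1 - σI ^ 2 * T / 2) =
        log y' + (σI * (ρ * w.1 + √(1 - ρ ^ 2) * w.2) - σI ^ 2 * T / 2) by
          rw [mul_add, mul_div_cancel₀ _ ha.ne']; ring,
      exp_add, exp_log hy']
  have hF := hasDerivAt_integral_prod_gaussianReal_comp_add (ν := gaussianReal 0 T.toNNReal)
    (toNNReal_pos.mpr hT).ne' (P := P) (by fun_prop)
    ((integrable_exp_mul_abs_gaussianReal _).const_mul _)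
    (fun w ↦ abs_mul_comp_exp_affine_le hgb hhb x _ _ _ _ _ w.1 w.2)
    (log y / (σI * √(1 - ρ ^ 2)))
  refine ((hF.comp y ((hasDerivAt_log hy.ne').div_const _)).congr_of_eventuallyEq ?_).congr_deriv
    ?_
  · filter_upwards [eventually_gt_nhds hy] with y' hy'
    simp only [Function.comp, hprice y' hy']
  · rw [← integral_mul_const]
    congr 1
    funext w
    rw [hprice y hy w, coe_toNNReal T hT.le]
    field_simp

/-- **Temperature delta in the correlated lognormal futures model.**
With `Fᴱ(x,u) = x·exp(σ_E u − σ_E² T/2)` and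
`Fᴵ(y,u,v) = y·exp(σ_I (ρu + √(1−ρ²) v) − σ_I² T/2)` driven by two independent Brownian
motions, for every `y > 0` the quanto price is differentiable in `y` with derivative given
by the Malliavin weight `v / (y σ_I √(1−ρ²) T)`. -/
theorem temperature_delta_correlated
    (T σE σI ρ : ℝ) (hT : 0 < T) (hσE : 0 < σE) (hσI : 0 < σI)
    (hρ : ρ ∈ Set.Ioo (-1 : ℝ) 1)
    (g h : ℝ → ℝ) (hg : Measurable g) (hh : Measurable h)
    (C : ℝ) (p : ℕ) (hC : 0 ≤ C)
    (hgb : ∀ z : ℝ, |g z| ≤ C * (1 + |z|) ^ p)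
    (hhb : ∀ z : ℝ, |h z| ≤ C * (1 + |z|) ^ p)
    (x y : ℝ) (hx : 0 < x) (hy : 0 < y) :
    HasDerivAt
      (fun y' : ℝ =>
        ∫ w : ℝ × ℝ,
          g (x * Real.exp (σE * w.1 - σE ^ 2 * T / 2)) *
            h (y' * Real.exp (σI * (ρ * w.1 + Real.sqrt (1 - ρ ^ 2) * w.2) - σI ^ 2 * T / 2))
          ∂((gaussianReal 0 T.toNNReal).prod (gaussianReal 0 T.toNNReal)))
      (∫ w : ℝ × ℝ,
          g (x * Real.exp (σE * w.1 - σE ^ 2 * T / 2)) *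
            h (y * Real.exp (σI * (ρ * w.1 + Real.sqrt (1 - ρ ^ 2) * w.2) - σI ^ 2 * T / 2)) *
            (w.2 / (y * σI * Real.sqrt (1 - ρ ^ 2) * T))
        ∂((gaussianReal 0 T.toNNReal).prod (gaussianReal 0 T.toNNReal)))
      y :=
  temperature_delta_correlated_general T σE σI ρ hT hσI hρ g h hg hh C p hgb hhb x y hy
end

section
/- Cross-gamma of the product call quanto option (payoff of Eq. (9)): in the independent lognormal futures model, for strikes K_E, K_I ∈ ℝ the price C(x,y) = ∫∫ max(F^E(x,u) − K_E, 0)·max(F^I(y,v) − K_I, 0) dμ(u,v) has a mixed second partial derivative ∂²C/∂x∂y at every x > 0, y > 0, equal to Δ_{EI} = ∫∫ max(F^E(x,u) − K_E, 0)·max(F^I(y,v) − K_I, 0) · (u·v)/(x·y·σ_E·σ_I·T²) dμ(u,v). -/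
/-!
By Fubini the price factorises as `C(x, y) = A(x) * B(y)`, where `A` and `B` are prices of
plain calls under `γ_T`, so `∂²C/∂x∂y = A'(x) * B'(y)`. The payoff `max (x * e(u) - K) 0`, with
`e(u) = exp (σ u - σ² T / 2)`, is Lipschitz in `x` and differentiable off the null set `{x * e(u) = K}`, so
`A'(x) = E[1{x e(u) > K} e(u)]`. This is `E[f'(u)] / (x σ)` for the call payoff `f` seen as a
function of the Gaussian variable `u`, and Gaussian integration by parts
(`E[f'(u)] = E[u f(u)] / T`, valid since `f` is continuous and smooth off a single point) turns
it into the Malliavin weight `u / (x σ T)`.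
-/

open MeasureTheory ProbabilityTheory Real Filter Set Topology
open scoped NNReal

theorem Function.Injective.exists_forall_ne_ne {α β : Type*} [Nonempty α] {f : α → β}
    (hf : Function.Injective f) (b : β) : ∃ a, ∀ u ≠ a, f u ≠ b := by
  by_cases h : ∃ a, f a = b
  · obtain ⟨a, ha⟩ := h
    exact ⟨a, fun u hu hub => hu (hf (hub.trans ha.symm))⟩
  · exact ⟨Classical.arbitrary α, fun u _ hub => h ⟨u, hub⟩⟩

theorem integral_eq_zero_of_hasDerivAt_off_of_integrable {E : Type*} [NormedAddCommGroup E]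
    [NormedSpace ℝ E] [CompleteSpace E] {f f' : ℝ → E} {a : ℝ} (hcont : ContinuousAt f a)
    (hderiv : ∀ x ≠ a, HasDerivAt f (f' x) x) (hf' : Integrable f') (hf : Integrable f) :
    ∫ x, f' x = 0 := by
  have hbot : Tendsto f atBot (𝓝 0) :=
    tendsto_zero_of_hasDerivAt_of_integrableOn_Iic (a := a - 1)
      (fun x hx => hderiv x (by linarith [mem_Iic.mp hx] : x < a).ne) hf'.integrableOn
      hf.integrableOn
  have htop : Tendsto f atTop (𝓝 0) :=
    tendsto_zero_of_hasDerivAt_of_integrableOn_Ioi (fun x hx => hderiv x (ne_of_gt hx))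
      hf'.integrableOn hf.integrableOn
  rw [← intervalIntegral.integral_Iic_add_Ioi (b := a) hf'.integrableOn hf'.integrableOn,
    integral_Iic_of_hasDerivAt_of_tendsto hcont.continuousWithinAt
      (fun x hx => hderiv x (ne_of_lt hx)) hf'.integrableOn hbot,
    integral_Ioi_of_hasDerivAt_of_tendsto hcont.continuousWithinAt
      (fun x hx => hderiv x (ne_of_gt hx)) hf'.integrableOn htop]
  abel

theorem HasDerivAt.max_zero {h : ℝ → ℝ} {h' t : ℝ} (hh : HasDerivAt h h' t) (ht : h t ≠ 0) :
    HasDerivAt (fun s => max (h s) 0) (if 0 < h t then h' else 0) t := by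
  rcases ht.lt_or_gt with hneg | hpos
  · rw [if_neg hneg.not_gt]
    refine (hasDerivAt_const t 0).congr_of_eventuallyEq ?_
    filter_upwards [hh.continuousAt.eventually (gt_mem_nhds hneg)] with s hs
    exact max_eq_right hs.le
  · rw [if_pos hpos]
    refine hh.congr_of_eventuallyEq ?_
    filter_upwards [hh.continuousAt.eventually (lt_mem_nhds hpos)] with s hs
    exact max_eq_left hs.le

theorem hasDerivAt_integral_max_mul_sub {α : Type*} [MeasurableSpace α] {ν : Measure α}
    [IsFiniteMeasure ν] {e : α → ℝ} (he : Integrable e ν) {K x : ℝ}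
    (hK : ∀ᵐ u ∂ν, x * e u ≠ K) :
    Integrable (fun u => if 0 < x * e u - K then e u else 0) ν ∧
      HasDerivAt (fun x' => ∫ u, max (x' * e u - K) 0 ∂ν)
        (∫ u, if 0 < x * e u - K then e u else 0 ∂ν) x := by
  have hcall : ∀ x', Integrable (fun u => max (x' * e u - K) 0) ν := fun x' =>
    ((he.const_mul x').sub (integrable_const K)).pos_part
  have hind_meas : Measurable fun t : ℝ => if 0 < x * t - K then t else 0 :=
    Measurable.ite (measurableSet_lt measurable_const (by fun_prop)) measurable_id
      measurable_const
  refine hasDerivAt_integral_of_dominated_loc_of_lip (bound := e) univ_mem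
    (Eventually.of_forall fun x' => (hcall x').aestronglyMeasurable) (hcall x)
    (hind_meas.comp_aemeasurable he.aemeasurable).aestronglyMeasurable
    (ae_of_all _ fun u => ?_) he ?_
  · refine LipschitzWith.lipschitzOnWith (LipschitzWith.of_dist_le_mul fun a b => ?_)
    rw [Real.dist_eq, Real.dist_eq, Real.coe_nnabs, ← abs_mul]
    exact (abs_max_sub_max_le_abs _ _ _).trans_eq (congrArg _ (by ring))
  · filter_upwards [hK] with u hu
    exact ((hasDerivAt_mul_const (e u)).sub_const K).max_zero (sub_ne_zero.mpr hu)

namespace ProbabilityTheory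

variable {μ : ℝ} {v : ℝ≥0}

lemma hasDerivAt_gaussianPDFReal (μ : ℝ) (v : ℝ≥0) (x : ℝ) :
    HasDerivAt (gaussianPDFReal μ v) (-((x - μ) / v) * gaussianPDFReal μ v x) x := by
  have h := ((((hasDerivAt_id' x).sub_const μ).fun_pow 2).fun_neg.div_const (2 * v)).exp.const_mul
    (√(2 * π * v))⁻¹
  rw [gaussianPDFReal_def]
  exact h.congr_deriv (by ring)

lemma integrable_gaussianReal_iff (hv : v ≠ 0) {f : ℝ → ℝ} :
    Integrable f (gaussianReal μ v) ↔ Integrable (fun x => gaussianPDFReal μ v x * f x) := by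
  rw [gaussianReal_of_var_ne_zero _ hv, integrable_withDensity_iff_integrable_smul'
    (measurable_gaussianPDF μ v) (ae_of_all _ fun _ => gaussianPDF_lt_top)]
  simp [toReal_gaussianPDF]

theorem integral_deriv_gaussianReal_eq_integral_mul (hv : v ≠ 0) {f f' : ℝ → ℝ} {a : ℝ}
    (hcont : ContinuousAt f a) (hderiv : ∀ x ≠ a, HasDerivAt f (f' x) x)
    (hf : Integrable f (gaussianReal μ v)) (hf' : Integrable f' (gaussianReal μ v))
    (hxf : Integrable (fun x => (x - μ) * f x) (gaussianReal μ v)) :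
    ∫ x, f' x ∂gaussianReal μ v = ∫ x, (x - μ) * f x / v ∂gaussianReal μ v := by
  rw [integrable_gaussianReal_iff hv] at hf hf' hxf
  have hboundary := integral_eq_zero_of_hasDerivAt_off_of_integrable
    ((hasDerivAt_gaussianPDFReal μ v a).continuousAt.mul hcont)
    (fun x hx => ((hasDerivAt_gaussianPDFReal μ v x).mul (hderiv x hx)).congr_deriv
      (show _ = gaussianPDFReal μ v x * f' x - gaussianPDFReal μ v x * ((x - μ) * f x) / v
        by ring))
    (hf'.sub (hxf.div_const _)) hf
  rw [integral_sub hf' (hxf.div_const _), sub_eq_zero] at hboundary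
  simp only [integral_gaussianReal_eq_integral_smul hv, smul_eq_mul, hboundary, mul_div_assoc]

theorem integrable_pow_abs_mul_exp_sub_gaussianReal (μ : ℝ) (v : ℝ≥0) (n : ℕ) (s c : ℝ) :
    Integrable (fun u => |u| ^ n * exp (s * u - c)) (gaussianReal μ v) := by
  have h := (integrable_pow_abs_mul_exp_of_mem_interior_integrableExpSet (X := id)
    (μ := gaussianReal μ v) (v := s) (by simp) n).mul_const (exp (-c))
  refine h.congr (ae_of_all _ fun u => ?_)
  simp only [id, sub_eq_add_neg, exp_add, mul_assoc]

theorem integrable_mul_max_mul_exp_sub_gaussianReal (μ : ℝ) (v : ℝ≥0) (σ c K x : ℝ) :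
    Integrable (fun u => u * max (x * exp (σ * u - c) - K) 0) (gaussianReal μ v) := by
  have hbound := ((integrable_pow_abs_mul_exp_sub_gaussianReal μ v 1 σ c).const_mul |x|).add
    ((integrable_pow_abs_mul_exp_sub_gaussianReal μ v 1 0 0).const_mul |K|)
  refine hbound.mono' (by fun_prop) (ae_of_all _ fun u => ?_)
  have hcall_le : max (x * exp (σ * u - c) - K) 0 ≤ |x| * exp (σ * u - c) + |K| :=
    max_le (by nlinarith [neg_abs_le K, le_abs_self x, exp_pos (σ * u - c)]) (by positivity)
  simp only [norm_mul, Real.norm_eq_abs, abs_of_nonneg (le_max_right _ (0 : ℝ)), pow_one,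
    zero_mul, sub_zero, exp_zero, mul_one]
  calc |u| * max (x * exp (σ * u - c) - K) 0 ≤ |u| * (|x| * exp (σ * u - c) + |K|) := by gcongr
    _ = |x| * (|u| * exp (σ * u - c)) + |K| * |u| := by ring

end ProbabilityTheory

theorem hasDerivAt_integral_call_gaussianReal {T σ : ℝ} (hT : 0 < T) (hσ : 0 < σ) (c K : ℝ)
    {x : ℝ} (hx : 0 < x) :
    HasDerivAt (fun x' => ∫ u, max (x' * exp (σ * u - c) - K) 0 ∂gaussianReal 0 T.toNNReal)
      (∫ u, max (x * exp (σ * u - c) - K) 0 * (u / (x * σ * T)) ∂gaussianReal 0 T.toNNReal)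
      x := by
  set γ := gaussianReal 0 T.toNNReal
  set e : ℝ → ℝ := fun u => exp (σ * u - c)
  have hv : T.toNNReal ≠ 0 := by simpa using hT
  have he : Integrable e γ := by
    simpa using integrable_pow_abs_mul_exp_sub_gaussianReal 0 T.toNNReal 0 σ c
  obtain ⟨a, ha⟩ : ∃ a, ∀ u ≠ a, x * e u ≠ K :=
    (StrictMono.const_mul (exp_strictMono.comp fun u w huw =>
      show σ * u - c < σ * w - c by gcongr) hx).injective.exists_forall_ne_ne K
  have hK : ∀ᵐ u ∂γ, x * e u ≠ K := by
    have := nullSingletonClass_gaussianReal (μ := 0) hv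
    exact measure_mono_null (fun u hu => by_contra fun hne => hu (ha u hne)) (measure_singleton a)
  obtain ⟨hind, hderiv⟩ := hasDerivAt_integral_max_mul_sub he hK
  have hstein := integral_deriv_gaussianReal_eq_integral_mul hv (a := a)
    (f := fun u => max (x * e u - K) 0)
    (f' := fun u => if 0 < x * e u - K then x * σ * e u else 0) (by fun_prop)
    (fun u hu => ((((hasDerivAt_id' u).const_mul σ).sub_const c).exp.const_mul x |>.sub_const K
      |>.max_zero (sub_ne_zero.mpr (ha u hu))).congr_deriv (by simp only [e]; split_ifs <;> ring))
    ((he.const_mul x).sub (integrable_const K)).pos_part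
    ((hind.const_mul (x * σ)).congr (ae_of_all _ fun u => by dsimp only; split_ifs <;> simp))
    (by simpa using integrable_mul_max_mul_exp_sub_gaussianReal 0 T.toNNReal σ c K x)
  convert hderiv using 1
  calc ∫ u, max (x * e u - K) 0 * (u / (x * σ * T)) ∂γ
      = (x * σ)⁻¹ * ∫ u, (u - 0) * max (x * e u - K) 0 / T.toNNReal ∂γ := by
        rw [← integral_const_mul, Real.coe_toNNReal _ hT.le]
        congr with u
        rw [sub_zero]
        field_simp
    _ = ∫ u, if 0 < x * e u - K then e u else 0 ∂γ := by
        rw [← hstein, ← integral_const_mul]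
        congr with u
        split_ifs
        · field_simp
        · simp

theorem hasDerivAt_deriv_integral_prod_mul {α β : Type*} [MeasurableSpace α] [MeasurableSpace β]
    {μ : Measure α} {ν : Measure β} [SFinite μ] [SFinite ν] (f : ℝ → α → ℝ) (g : ℝ → β → ℝ)
    {x y f' g' : ℝ} (hf : HasDerivAt (fun x' => ∫ a, f x' a ∂μ) f' x)
    (hg : HasDerivAt (fun y' => ∫ b, g y' b ∂ν) g' y) :
    (∀ y', DifferentiableAt ℝ (fun x' => ∫ w, f x' w.1 * g y' w.2 ∂μ.prod ν) x) ∧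
      HasDerivAt (fun y' => deriv (fun x' => ∫ w, f x' w.1 * g y' w.2 ∂μ.prod ν) x)
        (f' * g') y := by
  have hsep : ∀ y', (fun x' => ∫ w, f x' w.1 * g y' w.2 ∂μ.prod ν) =
      fun x' => (∫ a, f x' a ∂μ) * ∫ b, g y' b ∂ν := fun y' =>
    funext fun x' => integral_prod_mul _ _
  refine ⟨fun y' => hsep y' ▸ hf.differentiableAt.mul_const _, ?_⟩
  have hdx : (fun y' => deriv (fun x' => ∫ w, f x' w.1 * g y' w.2 ∂μ.prod ν) x) =
      fun y' => f' * ∫ b, g y' b ∂ν := funext fun y' => hsep y' ▸ (hf.mul_const _).deriv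
  exact hdx ▸ hg.const_mul f'

/-- **Cross-gamma of the product call quanto option (independent model).**
For the payoff `max(Fᴱ(x,u) − K_E, 0) · max(Fᴵ(y,v) − K_I, 0)`, the price
`C(x,y)` has a mixed second partial derivative `∂²C/∂x∂y` at every `x > 0`, `y > 0`:
for each fixed `y' > 0` the map `x ↦ C(x,y')` is differentiable at `x`, and
`y' ↦ ∂C/∂x(x,y')` is differentiable at `y` with derivative given by the product
Malliavin weight `u·v / (x y σ_E σ_I T²)`. -/
theorem cross_gamma_product_call_independent
    (T σE σI : ℝ) (hT : 0 < T) (hσE : 0 < σE) (hσI : 0 < σI)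
    (KE KI : ℝ) (x y : ℝ) (hx : 0 < x) (hy : 0 < y) :
    (∀ y' : ℝ, 0 < y' →
      DifferentiableAt ℝ
        (fun x' : ℝ =>
          ∫ w : ℝ × ℝ,
            max (x' * Real.exp (σE * w.1 - σE ^ 2 * T / 2) - KE) 0 *
              max (y' * Real.exp (σI * w.2 - σI ^ 2 * T / 2) - KI) 0
            ∂((gaussianReal 0 T.toNNReal).prod (gaussianReal 0 T.toNNReal))) x) ∧
    HasDerivAt
      (fun y' : ℝ =>
        deriv
          (fun x' : ℝ =>
            ∫ w : ℝ × ℝ,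
              max (x' * Real.exp (σE * w.1 - σE ^ 2 * T / 2) - KE) 0 *
                max (y' * Real.exp (σI * w.2 - σI ^ 2 * T / 2) - KI) 0
              ∂((gaussianReal 0 T.toNNReal).prod (gaussianReal 0 T.toNNReal))) x)
      (∫ w : ℝ × ℝ,
          max (x * Real.exp (σE * w.1 - σE ^ 2 * T / 2) - KE) 0 *
            max (y * Real.exp (σI * w.2 - σI ^ 2 * T / 2) - KI) 0 *
            (w.1 * w.2 / (x * y * σE * σI * T ^ 2))
        ∂((gaussianReal 0 T.toNNReal).prod (gaussianReal 0 T.toNNReal)))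
      y := by
  obtain ⟨hdiff, hmixed⟩ := hasDerivAt_deriv_integral_prod_mul
    (fun x' u => max (x' * exp (σE * u - σE ^ 2 * T / 2) - KE) 0)
    (fun y' v => max (y' * exp (σI * v - σI ^ 2 * T / 2) - KI) 0)
    (hasDerivAt_integral_call_gaussianReal hT hσE _ KE hx)
    (hasDerivAt_integral_call_gaussianReal hT hσI _ KI hy)
  refine ⟨fun y' _ => hdiff y', ?_⟩
  convert hmixed using 1
  rw [← integral_prod_mul]
  refine integral_congr_ae (ae_of_all _ fun w => ?_)
  field_simp
end

section
/- Temperature delta of the product call quanto option in the correlated model: for strikes K_E, K_I ∈ ℝ, the price C(x,y) = ∫∫ max(F^E(x,u) − K_E, 0)·max(F^I(y,u,v) − K_I, 0) dμ(u,v) is differentiable in y at every y > 0 with ∂C/∂y = ∫∫ max(F^E(x,u) − K_E, 0)·max(F^I(y,u,v) − K_I, 0) · v/(y·σ_I·√(1−ρ²)·T) dμ(u,v), even though the call payoff is not differentiable. -/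
/-!
Under the Gaussian law, moving the initial price from `y` to `z` is the same as shifting the
terminal value `W̃^I_T` by `s = log (z / y) / (σ_I √(1 − ρ²))`. By Cameron–Martin the shift
can be moved off the payoff onto the density `exp (s v / T − s² / (2T))`, which is smooth in
`s`; the derivative at `s = 0` is that of a moment generating function under the
payoff-weighted measure, and the chain rule with `ds/dz = 1 / (z σ_I √(1 − ρ²))` produces the
Malliavin weight.
-/

open MeasureTheory ProbabilityTheory Real
open scoped NNReal

section ExponentialMoments

variable {Ω : Type*} [MeasurableSpace Ω] {μ : Measure Ω} {f X : Ω → ℝ}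

theorem hasDerivAt_integral_mul_exp_mul (hf_nonneg : 0 ≤ f)
    (hf : ∀ c, Integrable (fun ω => f ω * exp (c * X ω)) μ) (t : ℝ) :
    HasDerivAt (fun t => ∫ ω, f ω * exp (t * X ω) ∂μ)
      (∫ ω, f ω * (X ω * exp (t * X ω)) ∂μ) t := by
  have hf_meas : AEMeasurable (fun ω => (f ω).toNNReal) μ :=
    (by simpa using (hf 0).aemeasurable : AEMeasurable f μ).real_toNNReal
  set ν := μ.withDensity (fun ω => (f ω).toNNReal)
  have h_integral (g : Ω → ℝ) : ∫ ω, g ω ∂ν = ∫ ω, f ω * g ω ∂μ := by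
    simp [ν, integral_withDensity_eq_integral_smul₀ hf_meas, NNReal.smul_def,
      Real.coe_toNNReal _ (hf_nonneg _)]
  have h_integrable (c : ℝ) : c ∈ integrableExpSet X ν := by
    simpa [integrableExpSet, ν, integrable_withDensity_iff_integrable_smul₀ hf_meas,
      NNReal.smul_def, Real.coe_toNNReal _ (hf_nonneg _)] using hf c
  convert hasDerivAt_mgf (X := X) (μ := ν) (t := t)
    (by simp [Set.eq_univ_of_forall h_integrable]) using 1
  · funext s
    rw [mgf, h_integral]
  · rw [h_integral]

end ExponentialMoments

theorem integrable_exp_mul_abs_gaussianReal (m : ℝ) (v : ℝ≥0) (c : ℝ) :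
    Integrable (fun t => exp (c * |t|)) (gaussianReal m v) := by
  refine ((integrable_exp_mul_gaussianReal c).add (integrable_exp_mul_gaussianReal (-c))).mono'
    (by fun_prop) (ae_of_all _ fun t => ?_)
  rw [norm_of_nonneg (exp_pos _).le]
  rcases abs_cases t with ⟨h, -⟩ | ⟨h, -⟩ <;> simp only [h, Pi.add_apply]
  · linarith [exp_pos (-c * t)]
  · rw [mul_neg, ← neg_mul]; linarith [exp_pos (c * t)]

theorem integrable_prod_gaussianReal_of_abs_le_mul_exp {m₁ m₂ : ℝ} {v₁ v₂ : ℝ≥0}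
    {g : ℝ × ℝ → ℝ}
    (hg : AEStronglyMeasurable g ((gaussianReal m₁ v₁).prod (gaussianReal m₂ v₂)))
    {C a b : ℝ} (h : ∀ w, |g w| ≤ C * exp (a * |w.1| + b * |w.2|)) :
    Integrable g ((gaussianReal m₁ v₁).prod (gaussianReal m₂ v₂)) := by
  refine (((integrable_exp_mul_abs_gaussianReal m₁ v₁ a).const_mul C).mul_prod
    (integrable_exp_mul_abs_gaussianReal m₂ v₂ b)).mono' hg (ae_of_all _ fun w => ?_)
  simpa [exp_add, mul_assoc] using h w

theorem gaussianReal_eq_withDensity {v : ℝ≥0} (hv : v ≠ 0) (s : ℝ) :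
    gaussianReal s v = (gaussianReal 0 v).withDensity
      (fun t => ENNReal.ofReal (exp (s / v * t - s ^ 2 / (2 * v)))) := by
  rw [gaussianReal_of_var_ne_zero s hv, gaussianReal_of_var_ne_zero 0 hv,
    ← withDensity_mul _ (measurable_gaussianPDF 0 v) (by fun_prop)]
  congr 1
  funext t
  simp only [Pi.mul_apply, gaussianPDF]
  rw [← ENNReal.ofReal_mul (gaussianPDFReal_nonneg _ _ _), gaussianPDFReal, gaussianPDFReal]
  congr 1
  rw [mul_assoc _ (exp _), ← exp_add]
  congr 2
  have hv' : (v : ℝ) ≠ 0 := by exact_mod_cast hv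
  field_simp
  ring

section GaussianShift

variable {α : Type*} [MeasurableSpace α] (ν : Measure α) [SFinite ν] {v : ℝ≥0}

theorem integral_comp_add_snd_gaussianReal (hv : v ≠ 0) (f : α × ℝ → ℝ) (s : ℝ) :
    ∫ w, f (w.1, w.2 + s) ∂(ν.prod (gaussianReal 0 v))
      = ∫ w, f w * exp (s / v * w.2 - s ^ 2 / (2 * v)) ∂(ν.prod (gaussianReal 0 v)) := by
  have h_map : (ν.prod (gaussianReal 0 v)).map (fun w => (w.1, w.2 + s))
      = ν.prod (gaussianReal s v) := by
    have h := Measure.map_prod_map ν (gaussianReal 0 v) measurable_id (measurable_add_const s)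
    rw [Measure.map_id, gaussianReal_map_add_const, zero_add] at h
    exact h.symm
  have h_emb : MeasurableEmbedding (fun w : α × ℝ => (w.1, w.2 + s)) :=
    ((MeasurableEquiv.refl α).prodCongr (MeasurableEquiv.addRight s)).measurableEmbedding
  rw [← h_emb.integral_map, h_map, gaussianReal_eq_withDensity hv,
    prod_withDensity_right (by fun_prop),
    integral_withDensity_eq_integral_toReal_smul (by fun_prop)
      (ae_of_all _ fun _ => ENNReal.ofReal_lt_top)]
  simp [ENNReal.toReal_ofReal (exp_pos _).le, mul_comm]

theorem hasDerivAt_integral_comp_add_snd_gaussianReal (hv : v ≠ 0) {f : α × ℝ → ℝ}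
    (hf_nonneg : 0 ≤ f)
    (hf : ∀ c, Integrable (fun w => f w * exp (c * w.2)) (ν.prod (gaussianReal 0 v))) :
    HasDerivAt (fun s => ∫ w, f (w.1, w.2 + s) ∂(ν.prod (gaussianReal 0 v)))
      ((∫ w, f w * w.2 ∂(ν.prod (gaussianReal 0 v))) / v) 0 := by
  have h_tilt : (fun s => ∫ w, f (w.1, w.2 + s) ∂(ν.prod (gaussianReal 0 v)))
      = fun s => exp (-(s ^ 2 / (2 * v))) *
          ∫ w, f w * exp (s / v * w.2) ∂(ν.prod (gaussianReal 0 v)) := by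
    funext s
    rw [integral_comp_add_snd_gaussianReal ν hv, ← integral_const_mul]
    congr 1
    funext w
    rw [sub_eq_add_neg, exp_add]
    ring
  have h_gauss : HasDerivAt (fun s : ℝ => exp (-(s ^ 2 / (2 * v)))) 0 0 := by
    simpa using ((hasDerivAt_pow 2 (0 : ℝ)).div_const (2 * (v : ℝ))).neg.exp
  have h_tilted :
      HasDerivAt (fun s => ∫ w, f w * exp (s / v * w.2) ∂(ν.prod (gaussianReal 0 v)))
      ((∫ w, f w * w.2 ∂(ν.prod (gaussianReal 0 v))) / v) 0 := by
    refine ((hasDerivAt_integral_mul_exp_mul hf_nonneg hf (0 / v)).comp 0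
      ((hasDerivAt_id 0).div_const (v : ℝ))).congr_deriv ?_
    simp [div_eq_mul_inv]
  rw [h_tilt]
  exact (h_gauss.mul h_tilted).congr_deriv (by simp)

theorem hasDerivAt_integral_of_lognormal_dependence (hv : v ≠ 0) {b y : ℝ} (hb : b ≠ 0)
    (hy : 0 < y) {F : ℝ → α × ℝ → ℝ}
    (hF : ∀ z, 0 < z → ∀ w, F z w = F y (w.1, w.2 + log (z / y) / b))
    (hF_nonneg : 0 ≤ F y)
    (hF_int : ∀ c, Integrable (fun w => F y w * exp (c * w.2)) (ν.prod (gaussianReal 0 v))) :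
    HasDerivAt (fun z => ∫ w, F z w ∂(ν.prod (gaussianReal 0 v)))
      (∫ w, F y w * (w.2 / (y * b * v)) ∂(ν.prod (gaussianReal 0 v))) y := by
  have h_shift : HasDerivAt (fun z => log (z / y) / b) (1 / (y * b)) y := by
    refine ((((hasDerivAt_id y).div_const y).log (by simp [hy.ne'])).div_const b).congr_deriv ?_
    simp only [id]
    field_simp
  have h_shifted := hasDerivAt_integral_comp_add_snd_gaussianReal ν hv hF_nonneg hF_int
  have h_comp := h_shifted.comp_of_eq y h_shift (by simp [hy.ne'])
  refine (h_comp.congr_of_eventuallyEq ?_).congr_deriv ?_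
  · filter_upwards [Ioi_mem_nhds hy] with z hz
    exact integral_congr_ae (ae_of_all _ (hF z hz))
  · rw [← integral_div, ← integral_mul_const]
    congr 1
    funext w
    ring

end GaussianShift

theorem max_mul_exp_sub_le {a K t s : ℝ} (hts : t ≤ s) (hs : 0 ≤ s) :
    max (a * exp t - K) 0 ≤ (|a| + |K|) * exp s := by
  have ha : a * exp t ≤ |a| * exp s :=
    (mul_le_mul_of_nonneg_right (le_abs_self a) (exp_pos t).le).trans
      (mul_le_mul_of_nonneg_left (exp_le_exp.2 hts) (abs_nonneg a))
  have hK : -K ≤ |K| * exp s :=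
    (neg_le_abs K).trans (le_mul_of_one_le_right (abs_nonneg K) (one_le_exp hs))
  exact max_le (by linarith) (by positivity)

/-- The product call payoff at the terminal Brownian values `w = (W^E_T, W̃^I_T)`. -/
noncomputable def productCallPayoff (T σE σI ρ KE KI x y : ℝ) (w : ℝ × ℝ) : ℝ :=
  max (x * exp (σE * w.1 - σE ^ 2 * T / 2) - KE) 0 *
    max (y * exp (σI * (ρ * w.1 + √(1 - ρ ^ 2) * w.2) - σI ^ 2 * T / 2) - KI) 0

section ProductCallPayoff

variable (T σE σI ρ KE KI x : ℝ)

theorem productCallPayoff_nonneg (y : ℝ) : 0 ≤ productCallPayoff T σE σI ρ KE KI x y :=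
  fun _ => mul_nonneg (le_max_right _ _) (le_max_right _ _)

theorem productCallPayoff_eq_shift {y z : ℝ} (hb : σI * √(1 - ρ ^ 2) ≠ 0) (hy : 0 < y)
    (hz : 0 < z) (w : ℝ × ℝ) :
    productCallPayoff T σE σI ρ KE KI x z w
      = productCallPayoff T σE σI ρ KE KI x y
          (w.1, w.2 + log (z / y) / (σI * √(1 - ρ ^ 2))) := by
  have h_exponent :
      σI * (ρ * w.1 + √(1 - ρ ^ 2) * (w.2 + log (z / y) / (σI * √(1 - ρ ^ 2)))) - σI ^ 2 * T / 2
        = (σI * (ρ * w.1 + √(1 - ρ ^ 2) * w.2) - σI ^ 2 * T / 2) + log (z / y) := by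
    obtain ⟨hσI, hβ⟩ := mul_ne_zero_iff.1 hb
    field_simp
    ring
  simp only [productCallPayoff, h_exponent, exp_add, exp_log (div_pos hz hy)]
  congr 3
  field_simp

theorem integrable_productCallPayoff_mul_exp (hT : 0 ≤ T) (y c m₁ m₂ : ℝ) (v₁ v₂ : ℝ≥0) :
    Integrable (fun w => productCallPayoff T σE σI ρ KE KI x y w * exp (c * w.2))
      ((gaussianReal m₁ v₁).prod (gaussianReal m₂ v₂)) := by
  set β := √(1 - ρ ^ 2)
  refine integrable_prod_gaussianReal_of_abs_le_mul_exp
    (Continuous.aestronglyMeasurable (by unfold productCallPayoff; fun_prop))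
    (C := (|x| + |KE|) * (|y| + |KI|)) (a := |σE| + |σI| * |ρ|) (b := |σI| * β + |c|)
    fun w => ?_
  have hE : max (x * exp (σE * w.1 - σE ^ 2 * T / 2) - KE) 0
      ≤ (|x| + |KE|) * exp (|σE| * |w.1|) := by
    refine max_mul_exp_sub_le ?_ (by positivity)
    have : 0 ≤ σE ^ 2 * T / 2 := by positivity
    linarith [(le_abs_self (σE * w.1)).trans_eq (abs_mul σE w.1)]
  have hI : max (y * exp (σI * (ρ * w.1 + β * w.2) - σI ^ 2 * T / 2) - KI) 0
      ≤ (|y| + |KI|) * exp (|σI| * (|ρ| * |w.1| + β * |w.2|)) := by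
    refine max_mul_exp_sub_le ?_ (by positivity)
    have h_lin := abs_add_le (ρ * w.1) (β * w.2)
    rw [abs_mul, abs_mul, abs_of_nonneg (sqrt_nonneg _ : 0 ≤ β)] at h_lin
    have : 0 ≤ σI ^ 2 * T / 2 := by positivity
    nlinarith [(le_abs_self _).trans_eq (abs_mul σI (ρ * w.1 + β * w.2)), abs_nonneg σI]
  have hc : exp (c * w.2) ≤ exp (|c| * |w.2|) :=
    exp_le_exp.2 ((le_abs_self _).trans_eq (abs_mul c w.2))
  rw [abs_of_nonneg
    (mul_nonneg (productCallPayoff_nonneg T σE σI ρ KE KI x y w) (exp_pos _).le)]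
  calc productCallPayoff T σE σI ρ KE KI x y w * exp (c * w.2)
      ≤ (|x| + |KE|) * exp (|σE| * |w.1|) *
          ((|y| + |KI|) * exp (|σI| * (|ρ| * |w.1| + β * |w.2|))) * exp (|c| * |w.2|) := by
        unfold productCallPayoff
        gcongr
    _ = _ := by
        rw [show (|σE| + |σI| * |ρ|) * |w.1| + (|σI| * β + |c|) * |w.2|
            = |σE| * |w.1| + |σI| * (|ρ| * |w.1| + β * |w.2|) + |c| * |w.2| by ring,
          exp_add, exp_add]
        ring

end ProductCallPayoff

theorem temperature_delta_product_call_correlated_general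
    (T σE σI ρ : ℝ) (hT : 0 < T) (hσI : 0 < σI)
    (hρ : ρ ∈ Set.Ioo (-1 : ℝ) 1)
    (KE KI : ℝ) (x y : ℝ) (hy : 0 < y) :
    HasDerivAt
      (fun y' : ℝ =>
        ∫ w : ℝ × ℝ,
          max (x * Real.exp (σE * w.1 - σE ^ 2 * T / 2) - KE) 0 *
            max (y' * Real.exp (σI * (ρ * w.1 + Real.sqrt (1 - ρ ^ 2) * w.2) -
              σI ^ 2 * T / 2) - KI) 0
          ∂((gaussianReal 0 T.toNNReal).prod (gaussianReal 0 T.toNNReal)))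
      (∫ w : ℝ × ℝ,
          max (x * Real.exp (σE * w.1 - σE ^ 2 * T / 2) - KE) 0 *
            max (y * Real.exp (σI * (ρ * w.1 + Real.sqrt (1 - ρ ^ 2) * w.2) -
              σI ^ 2 * T / 2) - KI) 0 *
            (w.2 / (y * σI * Real.sqrt (1 - ρ ^ 2) * T))
        ∂((gaussianReal 0 T.toNNReal).prod (gaussianReal 0 T.toNNReal)))
      y := by
  have hb : σI * √(1 - ρ ^ 2) ≠ 0 :=
    (mul_pos hσI (sqrt_pos.2 (by nlinarith [hρ.1, hρ.2]))).ne'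
  have h := hasDerivAt_integral_of_lognormal_dependence (gaussianReal 0 T.toNNReal)
    (Real.toNNReal_pos.2 hT).ne' hb hy (F := productCallPayoff T σE σI ρ KE KI x)
    (fun z hz => productCallPayoff_eq_shift T σE σI ρ KE KI x hb hy hz)
    (productCallPayoff_nonneg T σE σI ρ KE KI x y)
    (fun c => integrable_productCallPayoff_mul_exp T σE σI ρ KE KI x hT.le y c 0 0 _ _)
  simpa only [productCallPayoff, Real.coe_toNNReal T hT.le, mul_assoc] using h

/-- **Temperature delta of the product call quanto option (correlated model).**
For the payoff `max(Fᴱ(x,u) − K_E, 0) · max(Fᴵ(y,u,v) − K_I, 0)` with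
`Fᴵ(y,u,v) = y·exp(σ_I (ρu + √(1−ρ²) v) − σ_I² T/2)`, the price is differentiable in the
initial temperature price `y > 0`, with derivative given by the Malliavin weight
`v / (y σ_I √(1−ρ²) T)` — even though the call payoff is not differentiable. -/
theorem temperature_delta_product_call_correlated
    (T σE σI ρ : ℝ) (hT : 0 < T) (hσE : 0 < σE) (hσI : 0 < σI)
    (hρ : ρ ∈ Set.Ioo (-1 : ℝ) 1)
    (KE KI : ℝ) (x y : ℝ) (hx : 0 < x) (hy : 0 < y) :
    HasDerivAt
      (fun y' : ℝ =>
        ∫ w : ℝ × ℝ,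
          max (x * Real.exp (σE * w.1 - σE ^ 2 * T / 2) - KE) 0 *
            max (y' * Real.exp (σI * (ρ * w.1 + Real.sqrt (1 - ρ ^ 2) * w.2) -
              σI ^ 2 * T / 2) - KI) 0
          ∂((gaussianReal 0 T.toNNReal).prod (gaussianReal 0 T.toNNReal)))
      (∫ w : ℝ × ℝ,
          max (x * Real.exp (σE * w.1 - σE ^ 2 * T / 2) - KE) 0 *
            max (y * Real.exp (σI * (ρ * w.1 + Real.sqrt (1 - ρ ^ 2) * w.2) -
              σI ^ 2 * T / 2) - KI) 0 *
            (w.2 / (y * σI * Real.sqrt (1 - ρ ^ 2) * T))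
        ∂((gaussianReal 0 T.toNNReal).prod (gaussianReal 0 T.toNNReal)))
      y :=
  temperature_delta_product_call_correlated_general T σE σI ρ hT hσI hρ KE KI x y hy
end
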